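/- arXiv:2308.00795 — 6 statements merged into one kernel-verified Lean document; each statement's English description precedes it below -/
import Mathlib

section
/- Consider J_i(m_i, m_j) = (σ²/(9b))(m_i + m_j)/((σ + m_i)(σ + m_j) - σ²) terms as in the shared-information payoff. If a pair (m_i, m_j) with 0 < m_i, m_j < m_0 satisfies ∂J_i/∂m_i = 0 and ∂J_j/∂m_j = 0, where ∂J_i/∂m_i = -(σ²/(9b)) m_j²/((σ + m_i)(σ + m_j) - σ²)² + 1/(m_i log α), then necessarily m_i = m_j. -/
/-- Shared-information first-order conditions: if an interior pair `(mi, mj)` with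
`0 < mi, mj < m0` satisfies `∂Jᵢ/∂mᵢ = 0` and `∂Jⱼ/∂mⱼ = 0`, where
`∂Jᵢ/∂mᵢ = -(σ²/(9b)) mⱼ²/((σ+mᵢ)(σ+mⱼ) - σ²)² + 1/(mᵢ log α)`,
then necessarily `mi = mj`. -/
theorem stmt_9 (σ b m0 α mi mj : ℝ) (hσ : 0 < σ) (hb : 0 < b) (hm0 : 0 < m0)
    (hα : 1 < α) (hmi : 0 < mi) (hmi' : mi < m0) (hmj : 0 < mj) (hmj' : mj < m0)
    (hFOCi : -(σ ^ 2 / (9 * b)) * mj ^ 2 / ((σ + mi) * (σ + mj) - σ ^ 2) ^ 2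
        + 1 / (mi * Real.log α) = 0)
    (hFOCj : -(σ ^ 2 / (9 * b)) * mi ^ 2 / ((σ + mj) * (σ + mi) - σ ^ 2) ^ 2
        + 1 / (mj * Real.log α) = 0) :
    mi = mj := by
  have hL : 0 < Real.log α := Real.log_pos hα
  have hD : 0 < (σ + mi) * (σ + mj) - σ ^ 2 := by nlinarith
  have hD' : 0 < (σ + mj) * (σ + mi) - σ ^ 2 := by nlinarith
  have h1 : σ ^ 2 * mj ^ 2 * (mi * Real.log α) = 9 * b * ((σ + mi) * (σ + mj) - σ ^ 2) ^ 2 := by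
    field_simp at hFOCi
    nlinarith [hFOCi]
  have h2 : σ ^ 2 * mi ^ 2 * (mj * Real.log α) = 9 * b * ((σ + mj) * (σ + mi) - σ ^ 2) ^ 2 := by
    field_simp at hFOCj
    nlinarith [hFOCj]
  have key : σ ^ 2 * Real.log α * mi * mj * (mj - mi) = 0 := by nlinarith [h1, h2]
  have hpos : (0:ℝ) < σ ^ 2 * Real.log α * mi * mj := by positivity
  have := (mul_eq_zero.mp key).resolve_left hpos.ne'
  linarith
end

section
/- For the shared-information payoff, at any symmetric point (m, m) satisfying the interior first-order condition 1/(m log α) = (σ²/(9b))·1/(2σ + m)², the second derivative of J_i with respect to m_i equals (σ²/(9b))·1/(2σ + m)³ > 0; hence any symmetric interior stationary point is a local minimum and not a Nash equilibrium. -/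
/-- Shared information: at any symmetric point `(m, m)` satisfying the interior
first-order condition `1/(m log α) = (σ²/(9b))·1/(2σ+m)²`, the second derivative
`∂²Jᵢ/∂mᵢ² = (σ²/(9b))·2m²(σ+m)/((σ+m)(σ+m) - σ²)³ - 1/(m² log α)` equals
`(σ²/(9b))·1/(2σ+m)³ > 0`; hence such a point is a local minimum, not a NE. -/
theorem stmt_10 (σ b m α : ℝ) (hσ : 0 < σ) (hb : 0 < b) (hm : 0 < m) (hα : 1 < α)
    (hFOC : 1 / (m * Real.log α) = (σ ^ 2 / (9 * b)) * (1 / (2 * σ + m) ^ 2)) :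
    (σ ^ 2 / (9 * b)) * (2 * m ^ 2 * (σ + m)) / (((σ + m) * (σ + m) - σ ^ 2) ^ 3)
        - 1 / (m ^ 2 * Real.log α)
      = (σ ^ 2 / (9 * b)) * (1 / (2 * σ + m) ^ 3) ∧
    0 < (σ ^ 2 / (9 * b)) * (1 / (2 * σ + m) ^ 3) := by
  have hL : 0 < Real.log α := Real.log_pos hα
  have hs : 0 < 2 * σ + m := by linarith
  have h1 : 1 / (m ^ 2 * Real.log α)
      = (σ ^ 2 / (9 * b)) * (1 / (m * (2 * σ + m) ^ 2)) := by
    have : 1 / (m ^ 2 * Real.log α) = (1 / m) * (1 / (m * Real.log α)) := by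
      field_simp
    rw [this, hFOC]
    field_simp
  constructor
  · rw [h1]
    have hden : ((σ + m) * (σ + m) - σ ^ 2) = m * (2 * σ + m) := by ring
    rw [hden]
    field_simp
    ring
  · positivity
end

section
/- The equation 9b(σ m_0 + m_i(σ + m_0))² - σ² m_0² m_i log α = 0 in m_i (a quadratic A m_i² + B m_i + C = 0 with A = 9b(σ + m_0)², B = 18bσm_0(σ + m_0) - σ²m_0² log α, C = 9bσ²m_0²) has no real solution if and only if σ(m_0 log α - 36b) - 36b m_0 < 0; in particular there is no real solution when m_0 < 36b/log α, or when m_0 > 36b/log α and σ < 36b m_0/(m_0 log α - 36b). -/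
/-- The quadratic `A m² + B m + C = 0` with `A = 9b(σ+m₀)²`,
`B = 18bσm₀(σ+m₀) - σ²m₀² log α`, `C = 9bσ²m₀²` (the interior best-response FOC
`9b(σm₀ + m(σ+m₀))² - σ²m₀² m log α = 0`) has no real solution iff
`σ(m₀ log α - 36b) - 36b m₀ < 0`; in particular there is no real solution
when `m₀ < 36b/log α`, or when `m₀ > 36b/log α` and
`σ < 36b m₀/(m₀ log α - 36b)`. -/
theorem stmt_11 (b σ m0 α : ℝ) (hb : 0 < b) (hσ : 0 < σ) (hm0 : 0 < m0) (hα : 1 < α)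
    (A B C : ℝ)
    (hA : A = 9 * b * (σ + m0) ^ 2)
    (hB : B = 18 * b * σ * m0 * (σ + m0) - σ ^ 2 * m0 ^ 2 * Real.log α)
    (hC : C = 9 * b * σ ^ 2 * m0 ^ 2) :
    ((¬ ∃ m : ℝ, A * m ^ 2 + B * m + C = 0) ↔
        σ * (m0 * Real.log α - 36 * b) - 36 * b * m0 < 0) ∧
    (m0 < 36 * b / Real.log α → ¬ ∃ m : ℝ, A * m ^ 2 + B * m + C = 0) ∧
    (m0 > 36 * b / Real.log α ∧ σ < 36 * b * m0 / (m0 * Real.log α - 36 * b) →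
        ¬ ∃ m : ℝ, A * m ^ 2 + B * m + C = 0) := by
  set L := Real.log α with hLdef
  have hL : 0 < L := Real.log_pos hα
  set D := σ * (m0 * L - 36 * b) - 36 * b * m0 with hDdef
  have hAne : A ≠ 0 := by
    rw [hA]; positivity
  have hkey : discrim A B C = σ ^ 3 * m0 ^ 3 * L * D := by
    rw [discrim, hA, hB, hC, hDdef]; ring
  have hcoef : 0 < σ ^ 3 * m0 ^ 3 * L := by positivity
  have main : (¬ ∃ m : ℝ, A * m ^ 2 + B * m + C = 0) ↔ D < 0 := by
    constructor
    · intro h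
      by_contra hD
      push_neg at hD
      have hdisc : 0 ≤ discrim A B C := by
        rw [hkey]; positivity
      obtain ⟨x, hx⟩ := exists_quadratic_eq_zero hAne
        ⟨Real.sqrt (discrim A B C), (Real.mul_self_sqrt hdisc).symm⟩
      exact h ⟨x, by rw [← hx]; ring⟩
    · intro hD ⟨m, hm⟩
      have hdisc : discrim A B C < 0 := by
        rw [hkey]
        exact mul_neg_of_pos_of_neg hcoef hD
      have hne := quadratic_ne_zero_of_discrim_ne_sq (a := A) (b := B) (c := C)
        (fun s hs => by nlinarith [sq_nonneg s]) m
      exact hne (by rw [← hm]; ring)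
  refine ⟨main, ?_, ?_⟩
  · intro h
    rw [main]
    rw [lt_div_iff₀ hL] at h
    nlinarith
  · rintro ⟨h1, h2⟩
    rw [main]
    rw [gt_iff_lt, div_lt_iff₀ hL] at h1
    have hpos : 0 < m0 * L - 36 * b := by linarith
    rw [lt_div_iff₀ hpos] at h2
    nlinarith
end

section
/- In the no-sharing game, if an interior pair (m_i, m_j) with 0 < m_i, m_j < m_0 satisfies both insurers' first-order conditions, then (2x_i - σ)²/(x_i - σ) = (2x_j - σ)²/(x_j - σ) where x_k = m_k + σ; consequently either m_i = m_j or m_j = σ²/(4 m_i). -/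
/-!
Both first-order conditions have the form `1 / (mₖ log α) = c · (2xₗ - σ)²` with the same
factor `c`, which cannot vanish since the left-hand sides do not. Eliminating `c` gives
`mᵢ (2xⱼ - σ)² = mⱼ (2xᵢ - σ)²`, and the difference of the two sides factors as
`(mᵢ - mⱼ)(σ² - 4 mᵢ mⱼ)`.
-/

theorem mul_eq_mul_of_one_div_eq_mul_div {K : Type*} [Field K] {L k E p q u v : K}
    (hL : L ≠ 0) (hp : p ≠ 0) (hq : q ≠ 0)
    (hu : 1 / (p * L) = k * (u / E)) (hv : 1 / (q * L) = k * (v / E)) :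
    p * u = q * v := by
  have hc : k / E ≠ 0 := by
    intro hc
    refine one_div_ne_zero (mul_ne_zero hp hL) ?_
    rw [hu, mul_div_left_comm, hc, mul_zero]
  have hu' : p * u * (L * (k / E)) = 1 := by
    field_simp at hu ⊢
    linear_combination -hu
  have hv' : q * v * (L * (k / E)) = 1 := by
    field_simp at hv ⊢
    linear_combination -hv
  exact mul_right_cancel₀ (mul_ne_zero hL hc) (hu'.trans hv'.symm)

theorem mul_two_mul_add_sq_eq_iff {R : Type*} [CommRing R] [IsDomain R] (m n s : R) :
    m * (2 * n + s) ^ 2 = n * (2 * m + s) ^ 2 ↔ m = n ∨ 4 * m * n = s ^ 2 := by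
  rw [← sub_eq_zero, ← sub_eq_zero (a := m), ← sub_eq_zero (a := 4 * m * n), ← mul_eq_zero]
  constructor <;> intro h <;> linear_combination -h

theorem stmt_15_general (σ b α mi mj : ℝ) (hα : 1 < α)
    (hmi : 0 < mi) (hmj : 0 < mj)
    (xi xj : ℝ) (hxi : xi = mi + σ) (hxj : xj = mj + σ)
    (hFOCi : 1 / ((xi - σ) * Real.log α)
        = (σ ^ 2 / b) * ((4 * xj * xi + σ ^ 2) / (4 * xj * xi - σ ^ 2))
            * ((2 * xj - σ) ^ 2 / (4 * xj * xi - σ ^ 2) ^ 2))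
    (hFOCj : 1 / ((xj - σ) * Real.log α)
        = (σ ^ 2 / b) * ((4 * xi * xj + σ ^ 2) / (4 * xi * xj - σ ^ 2))
            * ((2 * xi - σ) ^ 2 / (4 * xi * xj - σ ^ 2) ^ 2)) :
    (2 * xi - σ) ^ 2 / (xi - σ) = (2 * xj - σ) ^ 2 / (xj - σ) ∧
    (mi = mj ∨ mj = σ ^ 2 / (4 * mi)) := by
  rw [mul_right_comm 4 xi xj] at hFOCj
  rw [sub_eq_of_eq_add hxi] at hFOCi ⊢
  rw [sub_eq_of_eq_add hxj] at hFOCj ⊢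
  have key := mul_eq_mul_of_one_div_eq_mul_div (Real.log_pos hα).ne' hmi.ne' hmj.ne' hFOCi hFOCj
  refine ⟨?_, ?_⟩
  · rw [div_eq_div_iff hmi.ne' hmj.ne']
    linear_combination -key
  · subst hxi hxj
    rcases (mul_two_mul_add_sq_eq_iff mi mj σ).1 (by linear_combination key) with h | h
    · exact Or.inl h
    · exact Or.inr (by rw [eq_div_iff (by positivity)]; linear_combination h)

/-- No-sharing game: if an interior pair `(mi, mj)` with `0 < mi, mj < m₀` satisfies
both insurers' first-order conditions
`1/((xᵢ-σ) log α) = (σ²/b)·((4xⱼxᵢ+σ²)/(4xⱼxᵢ-σ²))·((2xⱼ-σ)²/(4xⱼxᵢ-σ²)²)`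
(and symmetrically), where `xₖ = mₖ + σ`, then
`(2xᵢ-σ)²/(xᵢ-σ) = (2xⱼ-σ)²/(xⱼ-σ)`; consequently `mi = mj` or `mj = σ²/(4mi)`. -/
theorem stmt_15 (σ b α m0 mi mj : ℝ) (hσ : 0 < σ) (hb : 0 < b) (hα : 1 < α)
    (hm0 : 0 < m0) (hmi : 0 < mi) (hmi' : mi < m0) (hmj : 0 < mj) (hmj' : mj < m0)
    (xi xj : ℝ) (hxi : xi = mi + σ) (hxj : xj = mj + σ)
    (hFOCi : 1 / ((xi - σ) * Real.log α)
        = (σ ^ 2 / b) * ((4 * xj * xi + σ ^ 2) / (4 * xj * xi - σ ^ 2))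
            * ((2 * xj - σ) ^ 2 / (4 * xj * xi - σ ^ 2) ^ 2))
    (hFOCj : 1 / ((xj - σ) * Real.log α)
        = (σ ^ 2 / b) * ((4 * xi * xj + σ ^ 2) / (4 * xi * xj - σ ^ 2))
            * ((2 * xi - σ) ^ 2 / (4 * xi * xj - σ ^ 2) ^ 2)) :
    (2 * xi - σ) ^ 2 / (xi - σ) = (2 * xj - σ) ^ 2 / (xj - σ) ∧
    (mi = mj ∨ mj = σ ^ 2 / (4 * mi)) :=
  stmt_15_general σ b α mi mj hα hmi hmj xi xj hxi hxj hFOCi hFOCj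
end

section
/- Let x = m + σ with σ > 2m > 0. Then (2m + σ)⁴ - 8σ²(m + σ)(m + 2σ) ≤ 0. Consequently, in the no-sharing game a symmetric stationary pair (m, m) with σ > 2m satisfies the second-order condition J_i''(m, m) ≤ 0 and is a local maximum. -/
/-- Let `x = m + σ` with `σ > 2m > 0`. Then
`(2m+σ)⁴ - 8σ²(m+σ)(m+2σ) ≤ 0`; consequently the second-order sign expression
`16x(x-σ)(2x²+σ²) - (4x²+σ²)(4x²-σ²)` is `≤ 0`, so a symmetric stationary pair
`(m, m)` with `σ > 2m` satisfies the second-order condition. -/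
theorem stmt_16 (σ m : ℝ) (hm : 0 < m) (hσ : 2 * m < σ)
    (x : ℝ) (hx : x = m + σ) :
    (2 * m + σ) ^ 4 - 8 * σ ^ 2 * (m + σ) * (m + 2 * σ) ≤ 0 ∧
    16 * x * (x - σ) * (2 * x ^ 2 + σ ^ 2)
      - (4 * x ^ 2 + σ ^ 2) * (4 * x ^ 2 - σ ^ 2) ≤ 0 := by
  have h1 : (2 * m + σ) ^ 4 - 8 * σ ^ 2 * (m + σ) * (m + 2 * σ) ≤ 0 := by
    have hσ0 : 0 < σ := by linarith
    have h2 : 0 < σ - 2*m := by linarith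
    nlinarith [mul_pos (mul_pos h2 hσ0) (mul_pos hσ0 hσ0),
      mul_pos (mul_pos h2 hm) (mul_pos hσ0 hσ0),
      mul_pos (mul_pos h2 hm) (mul_pos hm hσ0),
      mul_pos (mul_pos h2 hm) (mul_pos hm hm)]
  refine ⟨h1, ?_⟩
  subst hx
  nlinarith [h1]
end

section
/- For the no-sharing symmetric payoff, with x = m + σ, σ > 0, m ∈ (0, m_0]: since f_1(x,x) = (4x² + σ²)/(4x² - σ²) ≤ 5/3 and f_2(x,x) = 1/(2x + σ)² ≤ 1/(9σ²), one has J_i'(m, m) ≥ 1/(m_0 log α) - 5/(27b). Hence if m_0 ≤ 27b/(5 log α) then J_i'(m, m) ≥ 0 for every m ∈ (0, m_0]. -/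
/-- No-sharing symmetric marginal payoff bound: with `x = m + σ`, `σ > 0`,
`0 < m ≤ m₀`, one has `f₁(x,x) = (4x²+σ²)/(4x²-σ²) ≤ 5/3` and
`f₂(x,x) = 1/(2x+σ)² ≤ 1/(9σ²)`, hence
`J'(m,m) = 1/((x-σ) log α) - (σ²/b)·f₁(x,x)·f₂(x,x) ≥ 1/(m₀ log α) - 5/(27b)`;
so if `m₀ ≤ 27b/(5 log α)` then `J'(m,m) ≥ 0`. -/
theorem stmt_18 (σ b α m0 m : ℝ) (hσ : 0 < σ) (hb : 0 < b) (hα : 1 < α)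
    (hm0 : 0 < m0) (hm : 0 < m) (hmm0 : m ≤ m0)
    (x : ℝ) (hx : x = m + σ) :
    (4 * x ^ 2 + σ ^ 2) / (4 * x ^ 2 - σ ^ 2) ≤ 5 / 3 ∧
    1 / (2 * x + σ) ^ 2 ≤ 1 / (9 * σ ^ 2) ∧
    1 / ((x - σ) * Real.log α)
        - (σ ^ 2 / b) * ((4 * x ^ 2 + σ ^ 2) / (4 * x ^ 2 - σ ^ 2))
            * (1 / (2 * x + σ) ^ 2)
      ≥ 1 / (m0 * Real.log α) - 5 / (27 * b) ∧
    (m0 ≤ 27 * b / (5 * Real.log α) →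
      0 ≤ 1 / ((x - σ) * Real.log α)
          - (σ ^ 2 / b) * ((4 * x ^ 2 + σ ^ 2) / (4 * x ^ 2 - σ ^ 2))
              * (1 / (2 * x + σ) ^ 2)) := by
  have hlog : 0 < Real.log α := Real.log_pos hα
  have hxσ : σ < x := by nlinarith
  have hden : 0 < 4 * x ^ 2 - σ ^ 2 := by nlinarith
  have h2xσ : 3 * σ < 2 * x + σ := by nlinarith
  have hf1 : (4 * x ^ 2 + σ ^ 2) / (4 * x ^ 2 - σ ^ 2) ≤ 5 / 3 := by
    rw [div_le_div_iff₀ hden (by norm_num)]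
    nlinarith
  have hf2 : 1 / (2 * x + σ) ^ 2 ≤ 1 / (9 * σ ^ 2) := by
    apply one_div_le_one_div_of_le (by positivity)
    nlinarith
  have hf1pos : 0 ≤ (4 * x ^ 2 + σ ^ 2) / (4 * x ^ 2 - σ ^ 2) := by positivity
  have hf2pos : 0 ≤ 1 / (2 * x + σ) ^ 2 := by positivity
  have hprod : (σ ^ 2 / b) * ((4 * x ^ 2 + σ ^ 2) / (4 * x ^ 2 - σ ^ 2))
      * (1 / (2 * x + σ) ^ 2) ≤ 5 / (27 * b) := by
    have h1 : (σ ^ 2 / b) * ((4 * x ^ 2 + σ ^ 2) / (4 * x ^ 2 - σ ^ 2))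
        * (1 / (2 * x + σ) ^ 2) ≤ (σ ^ 2 / b) * (5 / 3) * (1 / (9 * σ ^ 2)) := by
      apply mul_le_mul (mul_le_mul_of_nonneg_left hf1 (by positivity)) hf2 hf2pos
      positivity
    have h2 : (σ ^ 2 / b) * (5 / 3) * (1 / (9 * σ ^ 2)) = 5 / (27 * b) := by
      field_simp; ring
    linarith
  have hfirst : 1 / (m0 * Real.log α) ≤ 1 / ((x - σ) * Real.log α) := by
    apply one_div_le_one_div_of_le (mul_pos (sub_pos.mpr hxσ) hlog)
    have : x - σ = m := by rw [hx]; ring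
    rw [this]
    exact mul_le_mul_of_nonneg_right hmm0 hlog.le
  refine ⟨hf1, hf2, by linarith, fun hcond => ?_⟩
  have hkey : 5 / (27 * b) ≤ 1 / (m0 * Real.log α) := by
    rw [div_le_div_iff₀ (by positivity) (by positivity)]
    have := mul_le_mul_of_nonneg_right hcond hlog.le
    rw [div_mul_eq_mul_div, le_div_iff₀ (by positivity)] at this
    nlinarith
  linarith
end
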